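/- Let k be any index attaining the maximum of the ratios, i.e., u_k = max_i u_i. Then (min_{j ≠ k} v̂_k A_{k,j} v̂_j) · ∑_{j ≠ k} (u_j − min_i u_i) ≤ 2ε · min_i u_i. -/

import Mathlib

/-!
Put `w i j = v̂ i A i j v̂ j`, so that `∑ j, u i w i j u j = 1` for every `i` while the row sums
of `w` lie in `[1 - ε, 1 + ε]`. At a maximiser `k` of `u`, splitting `u j = m + (u j - m)` with
`m = min u` gives `u k ((1 - ε) m + μ ∑_{j ≠ k} (u j - m)) ≤ 1`, where `μ = min_{j ≠ k} w k j`;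
at a minimiser, bounding every `u j` by `u k` gives `1 ≤ m u k (1 + ε)`. Comparing the two and
cancelling `u k` leaves `μ ∑_{j ≠ k} (u j - m) ≤ 2 ε m`.
-/

open Finset

section RowSums

variable {ι : Type*} [Fintype ι]

lemma sum_mul_le_sum_mul_of_le {r u : ι → ℝ} {M : ℝ} (hr : ∀ j, 0 ≤ r j) (hu : ∀ j, u j ≤ M) :
    ∑ j, r j * u j ≤ (∑ j, r j) * M := by
  rw [sum_mul]
  exact sum_le_sum fun j _ => mul_le_mul_of_nonneg_left (hu j) (hr j)

lemma sum_mul_add_mul_sum_sub_le {r u : ι → ℝ} {m μ : ℝ} {s : Finset ι} (hr : ∀ j, 0 ≤ r j)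
    (hu : ∀ j, m ≤ u j) (hμ : ∀ j ∈ s, μ ≤ r j) :
    (∑ j, r j) * m + μ * ∑ j ∈ s, (u j - m) ≤ ∑ j, r j * u j := by
  have hsplit : ∑ j, r j * u j = (∑ j, r j) * m + ∑ j, r j * (u j - m) := by
    rw [sum_mul, ← sum_add_distrib]
    exact sum_congr rfl fun j _ => by ring
  have hsub : μ * ∑ j ∈ s, (u j - m) ≤ ∑ j, r j * (u j - m) :=
    calc μ * ∑ j ∈ s, (u j - m) ≤ ∑ j ∈ s, r j * (u j - m) := by
          rw [mul_sum]
          exact sum_le_sum fun j hj => mul_le_mul_of_nonneg_right (hμ j hj) (sub_nonneg.2 (hu j))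
      _ ≤ ∑ j, r j * (u j - m) :=
          sum_le_sum_of_subset_of_nonneg (subset_univ s)
            fun j _ _ => mul_nonneg (hr j) (sub_nonneg.2 (hu j))
  linarith

lemma sum_div_mul_mul_div_eq (A : ι → ι → ℝ) (v vh : ι → ℝ) (hvh : ∀ i, vh i ≠ 0) (i : ι) :
    ∑ j, v i / vh i * (vh i * A i j * vh j) * (v j / vh j) = ∑ j, v i * A i j * v j :=
  sum_congr rfl fun j _ => by field_simp [hvh i, hvh j]

theorem mul_sum_sub_min_le_of_abs_rowSum_sub_one_le {w : ι → ι → ℝ} (hw : ∀ i j, 0 ≤ w i j)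
    {u : ι → ℝ} (hbal : ∀ i, ∑ j, u i * w i j * u j = 1) {ε : ℝ}
    (hrow : ∀ i, |∑ j, w i j - 1| ≤ ε) {k i₀ : ι} (hmax : ∀ j, u j ≤ u k)
    (hmin : ∀ j, u i₀ ≤ u j) (hpos : 0 < u i₀) {μ : ℝ} {s : Finset ι}
    (hμ : ∀ j ∈ s, μ ≤ w k j) :
    μ * ∑ j ∈ s, (u j - u i₀) ≤ 2 * ε * u i₀ := by
  have hbal' : ∀ i, u i * ∑ j, w i j * u j = 1 := fun i => by
    rw [← hbal i, mul_sum]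
    exact sum_congr rfl fun j _ => by ring
  have hk : 0 < u k := hpos.trans_le (hmax i₀)
  have hrow_k := (abs_le.1 (hrow k)).1
  have hrow_i₀ := (abs_le.1 (hrow i₀)).2
  have hlow : u k * ((1 - ε) * u i₀ + μ * ∑ j ∈ s, (u j - u i₀)) ≤ 1 :=
    calc u k * ((1 - ε) * u i₀ + μ * ∑ j ∈ s, (u j - u i₀))
        ≤ u k * ((∑ j, w k j) * u i₀ + μ * ∑ j ∈ s, (u j - u i₀)) := by
          gcongr
          linarith
      _ ≤ u k * ∑ j, w k j * u j := by
          gcongr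
          exact sum_mul_add_mul_sum_sub_le (hw k) hmin hμ
      _ = 1 := hbal' k
  have hup : 1 ≤ u k * ((1 + ε) * u i₀) :=
    calc 1 = u i₀ * ∑ j, w i₀ j * u j := (hbal' i₀).symm
      _ ≤ u i₀ * ((∑ j, w i₀ j) * u k) := by
          gcongr
          exact sum_mul_le_sum_mul_of_le (hw i₀) hmax
      _ ≤ u i₀ * ((1 + ε) * u k) := by
          gcongr
          linarith
      _ = u k * ((1 + ε) * u i₀) := by ring
  linarith [le_of_mul_le_mul_left (hlow.trans hup) hk]

end RowSums

/-- If `k` attains the maximum of the ratios `u i = v i / v̂ i`, then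
`(min_{j ≠ k} v̂_k A_{k,j} v̂_j) · ∑_{j ≠ k} (u_j − min_i u_i) ≤ 2ε · min_i u_i`. -/
theorem max_index_sum_bound
    {n : ℕ} (hn : 3 ≤ n)
    (A : Fin n → Fin n → ℝ)
    (hA_nonneg : ∀ i j, 0 ≤ A i j)
    (v : Fin n → ℝ) (hv : ∀ i, 0 < v i)
    (hds : ∀ i, ∑ j, v i * A i j * v j = 1)
    (ε : ℝ)
    (vh : Fin n → ℝ) (hvh : ∀ i, 0 < vh i)
    (happrox : ∀ i, |∑ j, vh i * A i j * vh j - 1| ≤ ε)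
    (k : Fin n) (hk : ∀ i, v i / vh i ≤ v k / vh k) :
    (Finset.inf' (Finset.univ.filter (fun j : Fin n => j ≠ k))
        ⟨_, Finset.mem_filter.mpr ⟨Finset.mem_univ _,
          (Classical.choose_spec
            (@exists_ne (Fin n) (Fin.nontrivial_iff_two_le.mpr (by omega)) k))⟩⟩
        (fun j => vh k * A k j * vh j)) *
      (∑ j ∈ Finset.univ.filter (fun j : Fin n => j ≠ k),
        (v j / vh j -
          Finset.inf' Finset.univ ⟨⟨0, by omega⟩, Finset.mem_univ _⟩
            (fun i => v i / vh i))) ≤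
    2 * ε *
      Finset.inf' Finset.univ ⟨⟨0, by omega⟩, Finset.mem_univ _⟩
        (fun i => v i / vh i) := by
  obtain ⟨i₀, -, hi₀⟩ := exists_mem_eq_inf' ⟨⟨0, by omega⟩, mem_univ _⟩ fun i => v i / vh i
  rw [hi₀]
  refine mul_sum_sub_min_le_of_abs_rowSum_sub_one_le
    (fun i j => mul_nonneg (mul_nonneg (hvh i).le (hA_nonneg i j)) (hvh j).le)
    (fun i => (sum_div_mul_mul_div_eq A v vh (fun i => (hvh i).ne') i).trans (hds i))
    happrox hk (fun j => hi₀ ▸ inf'_le _ (mem_univ j)) (div_pos (hv i₀) (hvh i₀))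
    fun j hj => inf'_le _ hj
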